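/- arXiv:2201.11077 — 3 statements merged into one kernel-verified Lean document; each statement's English description precedes it below -/
import Mathlib

section
/- Let a : ℕ → O_L be a sequence that is not identically zero. Then the set of zeroes {x ∈ m_L : Σ_{n≥0} a_n x^n/n! = 0} is finite. (First part of Lemma 2.3: a non-zero divided-power series over O_L has only finitely many zeroes in the residue disk m_L.) -/
/-!
Substituting `x = p u` turns the series into `g u = ∑ c m * u ^ m` with `c m = a m * p ^ m / m!`,
and Legendre's formula `(p - 1) v_p(m!) ≤ m` with `p ≥ 3` gives `‖c m‖ ≤ (√p)⁻¹ ^ m`; since `L` is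
unramified, the zeroes with `‖x‖ < 1` have `‖u‖ ≤ 1`. Infinitely many zeroes of `g` in the compact
closed unit ball would accumulate at some `z`, so `g` would vanish near `z` by the isolated zeros
principle. In an ultrametric field `g` can be re-expanded around `z` on the whole closed unit ball;
all coefficients of that expansion vanish, hence `g` vanishes on the unit ball and `c = 0`.
-/

open Filter Topology Finset FormalMultilinearSeries
open scoped NNReal ENNReal

theorem Summable.tsum_eq_tsum_sum_antidiagonal {A α : Type*} [AddCommMonoid A]
    [HasAntidiagonal A] [AddCommGroup α] [UniformSpace α] [IsUniformAddGroup α]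
    [CompleteSpace α] [T0Space α]
    {f : A × A → α} (hf : Summable f) :
    ∑' q, f q = ∑' n, ∑ q ∈ antidiagonal n, f q := by
  conv_rhs => congr; ext; rw [← Finset.sum_finset_coe, ← tsum_fintype (L := .unconditional _)]
  rw [← HasAntidiagonal.sigmaAntidiagonalEquivProd.tsum_eq f]
  exact (HasAntidiagonal.sigmaAntidiagonalEquivProd.summable_iff.2 hf).tsum_sigma

section ScalarPowerSeries

variable {L : Type*} [NontriviallyNormedField L] {c : ℕ → L}

lemma le_ofScalars_radius_of_bound {C : ℝ} {r : ℝ≥0} (h : ∀ n, ‖c n‖ * (r : ℝ) ^ n ≤ C) :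
    (r : ℝ≥0∞) ≤ (ofScalars L c).radius :=
  le_radius_of_bound _ C fun n => by rw [ofScalars_norm]; exact h n

lemma one_lt_ofScalars_radius {θ : ℝ} (hθ0 : 0 ≤ θ) (hθ1 : θ < 1) (hc : ∀ n, ‖c n‖ ≤ θ ^ n) :
    1 < (ofScalars L c).radius := by
  obtain ⟨s, hθs, hs1⟩ := exists_between hθ1
  have hs0 : 0 < s := hθ0.trans_lt hθs
  refine lt_of_lt_of_le ?_
    (le_ofScalars_radius_of_bound (r := (⟨s⁻¹, by positivity⟩ : ℝ≥0)) (C := 1) fun n => ?_)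
  · exact ENNReal.one_lt_coe_iff.2 <| NNReal.coe_lt_coe.1 <| (one_lt_inv₀ hs0).2 hs1
  · calc ‖c n‖ * s⁻¹ ^ n ≤ θ ^ n * s⁻¹ ^ n := by gcongr; exact hc n
      _ = (θ / s) ^ n := by rw [div_eq_mul_inv, mul_pow]
      _ ≤ 1 := pow_le_one₀ (by positivity) ((div_le_one hs0).2 hθs.le)

variable [CompleteSpace L]

lemma hasFPowerSeriesOnBall_ofScalars (hr : 0 < (ofScalars L c).radius) :
    HasFPowerSeriesOnBall (fun y => ∑' n, c n * y ^ n) (ofScalars L c) 0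
      (ofScalars L c).radius := by
  convert (ofScalars L c).hasFPowerSeriesOnBall hr using 1
  exact funext fun y => (ofScalars_sum_eq c y).symm

theorem eq_zero_of_tsum_mul_pow_eventuallyEq_zero {C : ℝ} (hc : ∀ n, ‖c n‖ ≤ C)
    (h : (fun y => ∑' n, c n * y ^ n) =ᶠ[𝓝 0] 0) : c = 0 := by
  have hr : 0 < (ofScalars L c).radius :=
    zero_lt_one.trans_le (le_ofScalars_radius_of_bound (r := 1) (C := C) (by simpa using hc))
  exact (ofScalars_series_eq_zero L).1
    ((hasFPowerSeriesOnBall_ofScalars hr).hasFPowerSeriesAt.eq_zero_of_eventually h)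

end ScalarPowerSeries

section Ultrametric

variable {L : Type*} [NontriviallyNormedField L] [IsUltrametricDist L]

lemma norm_natCast_mul_mul_pow_le (j k : ℕ) (a : L) {z : L} (hz : ‖z‖ ≤ 1) :
    ‖(j : L) * a * z ^ k‖ ≤ ‖a‖ := by
  rw [norm_mul, norm_mul, norm_pow]
  calc ‖(j : L)‖ * ‖a‖ * ‖z‖ ^ k ≤ 1 * ‖a‖ * 1 := by
        gcongr
        · exact IsUltrametricDist.norm_natCast_le_one L j
        · exact pow_le_one₀ (norm_nonneg z) hz
    _ = ‖a‖ := by ring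

variable [CompleteSpace L] {c : ℕ → L} {θ : ℝ}

/-- Unlike the archimedean `FormalMultilinearSeries.changeOrigin`, the re-expansion around `z`
holds on the whole closed unit ball, not just near `z`. -/
theorem tsum_mul_add_pow_eq_tsum_tsum (hθ0 : 0 ≤ θ) (hθ1 : θ < 1) (hc : ∀ m, ‖c m‖ ≤ θ ^ m)
    {z y : L} (hz : ‖z‖ ≤ 1) (hy : ‖y‖ ≤ 1) :
    ∑' m, c m * (z + y) ^ m
      = ∑' n, (∑' k, ((n + k).choose n : L) * c (n + k) * z ^ k) * y ^ n := by
  set F : ℕ × ℕ → L := fun q => ((q.1 + q.2).choose q.1 : L) * c (q.1 + q.2) * z ^ q.2 * y ^ q.1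
  have hF : Summable F := by
    refine Summable.of_norm_bounded ((summable_geometric_of_lt_one hθ0 hθ1).mul_of_nonneg
      (summable_geometric_of_lt_one hθ0 hθ1) (pow_nonneg hθ0) (pow_nonneg hθ0)) fun q => ?_
    calc ‖F q‖ ≤ ‖c (q.1 + q.2)‖ * ‖y ^ q.1‖ := by
          rw [norm_mul]; gcongr; exact norm_natCast_mul_mul_pow_le _ _ _ hz
      _ ≤ θ ^ (q.1 + q.2) * 1 := by
          gcongr
          · exact hc _
          · rw [norm_pow]; exact pow_le_one₀ (norm_nonneg y) hy
      _ = θ ^ q.1 * θ ^ q.2 := by rw [mul_one, pow_add]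
  have hdiag : ∀ m, ∑ q ∈ antidiagonal m, F q = c m * (z + y) ^ m := by
    intro m
    rw [add_comm z y, (Commute.all y z).add_pow', Finset.mul_sum]
    refine Finset.sum_congr rfl fun q hq => ?_
    rw [HasAntidiagonal.mem_antidiagonal] at hq
    subst hq
    simp only [F, nsmul_eq_mul]
    ring
  calc ∑' m, c m * (z + y) ^ m = ∑' q, F q := by
        rw [hF.tsum_eq_tsum_sum_antidiagonal]; exact tsum_congr fun m => (hdiag m).symm
    _ = ∑' n, ∑' k, F (n, k) := hF.tsum_prod
    _ = _ := tsum_congr fun n => by rw [← tsum_mul_right]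

theorem eq_zero_of_tsum_mul_pow_eventuallyEq_zero_of_norm_le_one (hθ0 : 0 ≤ θ) (hθ1 : θ < 1)
    (hc : ∀ m, ‖c m‖ ≤ θ ^ m) {z : L} (hz : ‖z‖ ≤ 1)
    (h : (fun u => ∑' m, c m * u ^ m) =ᶠ[𝓝 z] 0) : c = 0 := by
  set T : ℕ → L := fun n => ∑' k, ((n + k).choose n : L) * c (n + k) * z ^ k
  have hT : ∀ n, ‖T n‖ ≤ 1 := fun n =>
    IsUltrametricDist.norm_tsum_le_of_forall_le_of_nonneg zero_le_one fun k =>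
      (norm_natCast_mul_mul_pow_le _ _ _ hz).trans <| (hc _).trans (pow_le_one₀ hθ0 hθ1.le)
  have hT0 : T = 0 := by
    refine eq_zero_of_tsum_mul_pow_eventuallyEq_zero hT ?_
    have hshift : Tendsto (z + ·) (𝓝 0) (𝓝 z) := by
      simpa using (continuous_const_add z).tendsto 0
    filter_upwards [hshift.eventually h, Metric.closedBall_mem_nhds (0 : L) one_pos] with y hy hy1
    rw [← tsum_mul_add_pow_eq_tsum_tsum hθ0 hθ1 hc hz (mem_closedBall_zero_iff.1 hy1)]
    exact hy
  refine eq_zero_of_tsum_mul_pow_eventuallyEq_zero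
    (fun m => (hc m).trans (pow_le_one₀ hθ0 hθ1.le)) ?_
  filter_upwards [Metric.closedBall_mem_nhds (0 : L) one_pos] with w hw
  have hwz : ‖w - z‖ ≤ 1 := by
    rw [sub_eq_add_neg]
    exact (IsUltrametricDist.norm_add_le_max _ _).trans
      (max_le (mem_closedBall_zero_iff.1 hw) (by rwa [norm_neg]))
  rw [Pi.zero_apply, ← add_sub_cancel z w, tsum_mul_add_pow_eq_tsum_tsum hθ0 hθ1 hc hz hwz]
  change ∑' n, T n * (w - z) ^ n = 0
  simp [hT0]

theorem finite_setOf_tsum_mul_pow_eq_zero [ProperSpace L] (hθ0 : 0 ≤ θ) (hθ1 : θ < 1)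
    (hc : ∀ m, ‖c m‖ ≤ θ ^ m) (hne : c ≠ 0) :
    {u : L | ‖u‖ ≤ 1 ∧ ∑' m, c m * u ^ m = 0}.Finite := by
  by_contra hinf
  obtain ⟨z, hz, hacc⟩ := Set.Infinite.exists_accPt_of_subset_isCompact hinf
    (isCompact_closedBall (0 : L) 1) fun u hu => mem_closedBall_zero_iff.2 hu.1
  rw [mem_closedBall_zero_iff] at hz
  have hanalytic : AnalyticAt L (fun u => ∑' m, c m * u ^ m) z := by
    have hr := one_lt_ofScalars_radius (L := L) hθ0 hθ1 hc
    refine (hasFPowerSeriesOnBall_ofScalars (zero_lt_one.trans hr)).analyticAt_of_mem ?_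
    rw [mem_eball_zero_iff, enorm_eq_nnnorm]
    exact lt_of_le_of_lt (by exact_mod_cast hz) hr
  refine hne (eq_zero_of_tsum_mul_pow_eventuallyEq_zero_of_norm_le_one hθ0 hθ1 hc hz ?_)
  exact hanalytic.frequently_zero_iff_eventually_zero.1
    ((accPt_iff_frequently_nhdsNE.1 hacc).mono fun u hu => hu.2)

end Ultrametric

lemma two_mul_padicValNat_factorial_le {p : ℕ} [Fact p.Prime] (hp : Odd p) (m : ℕ) :
    2 * padicValNat p m.factorial ≤ m := by
  have hp3 : 3 ≤ p := by
    have := (Fact.out : p.Prime).two_le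
    have := Nat.odd_iff.1 hp
    omega
  calc 2 * padicValNat p m.factorial ≤ (p - 1) * padicValNat p m.factorial := by gcongr; omega
    _ ≤ m := (sub_one_mul_padicValNat_factorial m).trans_le (Nat.sub_le _ _)

lemma norm_le_inv_of_norm_lt_one {E : Type*} [NormedAddCommGroup E] {q : ℝ} (hq : 1 < q)
    (hval : ∀ y : E, y ≠ 0 → ∃ n : ℤ, ‖y‖ = q ^ n) {x : E} (hx : ‖x‖ < 1) : ‖x‖ ≤ q⁻¹ := by
  rcases eq_or_ne x 0 with rfl | hx0
  · simpa using (zero_lt_one.trans hq).le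
  obtain ⟨n, hn⟩ := hval x hx0
  rw [hn] at hx ⊢
  have hn_neg : n ≤ -1 := by
    by_contra! h
    exact hx.not_ge (one_le_zpow₀ hq.le (by omega))
  simpa using zpow_le_zpow_right₀ hq.le hn_neg

section PadicExtension

variable {p : ℕ} [Fact p.Prime] {L : Type*} [NormedField L] [Algebra ℚ_[p] L]

lemma norm_natCast_eq_of_norm_algebraMap (hext : ∀ q : ℚ_[p], ‖algebraMap ℚ_[p] L q‖ = ‖q‖)
    {n : ℕ} (hn : n ≠ 0) : ‖(n : L)‖ = (p : ℝ) ^ (-(padicValNat p n : ℤ)) := by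
  rw [← map_natCast (algebraMap ℚ_[p] L), hext, Padic.norm_eq_zpow_neg_valuation (by simpa),
    Padic.valuation_natCast]

lemma norm_mul_pow_div_factorial_le (hp : Odd p)
    (hext : ∀ q : ℚ_[p], ‖algebraMap ℚ_[p] L q‖ = ‖q‖) {a : L} (ha : ‖a‖ ≤ 1) (m : ℕ) :
    ‖a * (p : L) ^ m / m.factorial‖ ≤ (√p)⁻¹ ^ m := by
  have hp1 : (1 : ℝ) ≤ p := by exact_mod_cast (Fact.out : p.Prime).one_le
  have hp0 : (0 : ℝ) < p := zero_lt_one.trans_le hp1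
  have hsqrt : (p : ℝ) ^ padicValNat p m.factorial ≤ √p ^ m :=
    calc (p : ℝ) ^ padicValNat p m.factorial = √p ^ (2 * padicValNat p m.factorial) := by
          rw [pow_mul, Real.sq_sqrt hp0.le]
      _ ≤ √p ^ m := pow_le_pow_right₀ (Real.one_le_sqrt.2 hp1)
          (two_mul_padicValNat_factorial_le hp m)
  rw [norm_div, norm_mul, norm_pow,
    norm_natCast_eq_of_norm_algebraMap hext (Fact.out : p.Prime).ne_zero,
    norm_natCast_eq_of_norm_algebraMap hext m.factorial_ne_zero]
  simp only [padicValNat_self, zpow_neg, zpow_natCast, pow_one, div_inv_eq_mul]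
  calc ‖a‖ * (p : ℝ)⁻¹ ^ m * (p : ℝ) ^ padicValNat p m.factorial
      ≤ 1 * (p : ℝ)⁻¹ ^ m * √p ^ m := by gcongr
    _ = (√p)⁻¹ ^ m := by
        rw [one_mul, ← mul_pow]
        congr 1
        field_simp
        exact Real.sq_sqrt hp0.le

end PadicExtension

/-- a non-zero divided-power series over `O_L` has only finitely many
zeroes in the residue disk `m_L`. Here `p` is odd and `L/ℚ_p` is finite unramified. -/
theorem statement4 (p : ℕ) [Fact p.Prime] (hp : Odd p) (L : Type*) [NormedField L]
    [CompleteSpace L] [IsUltrametricDist L] [CharZero L]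
    [Algebra ℚ_[p] L] [FiniteDimensional ℚ_[p] L]
    (hext : ∀ q : ℚ_[p], ‖algebraMap ℚ_[p] L q‖ = ‖q‖)
    (hur : ∀ y : L, y ≠ 0 → ∃ n : ℤ, ‖y‖ = (p : ℝ) ^ n)
    (a : ℕ → L) (ha : ∀ n, ‖a n‖ ≤ 1) (hnz : ∃ n, a n ≠ 0) :
    {x : L | ‖x‖ < 1 ∧ ∑' n : ℕ, a n * x ^ n / (n.factorial : L) = 0}.Finite := by
  have hp1 : (1 : ℝ) < p := by exact_mod_cast (Fact.out : p.Prime).one_lt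
  have hpL : ‖(p : L)‖ = (p : ℝ)⁻¹ := by
    rw [← map_natCast (algebraMap ℚ_[p] L), hext, Padic.norm_p]
  let : NontriviallyNormedField L :=
    { non_trivial := ⟨(p : L)⁻¹, by rwa [norm_inv, hpL, inv_inv]⟩ }
  let : NormedSpace ℚ_[p] L := ⟨fun r x => by rw [Algebra.smul_def, norm_mul, hext]⟩
  have : ProperSpace L := FiniteDimensional.proper ℚ_[p] L
  have hp0 : (p : L) ≠ 0 := Nat.cast_ne_zero.2 (Fact.out : p.Prime).ne_zero
  set c : ℕ → L := fun m => a m * (p : L) ^ m / m.factorial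
  have hc : c ≠ 0 := fun h => by
    obtain ⟨n, hn⟩ := hnz
    exact hn (by simpa [c, hp0, Nat.factorial_ne_zero] using congrFun h n)
  have hθ1 : (√p)⁻¹ < 1 :=
    inv_lt_one_of_one_lt₀ (by simpa using Real.sqrt_lt_sqrt zero_le_one hp1)
  refine ((finite_setOf_tsum_mul_pow_eq_zero (by positivity) hθ1
    (fun m => norm_mul_pow_div_factorial_le hp hext (ha m) m) hc).image ((p : L) * ·)).subset ?_
  rintro x ⟨hx1, hx2⟩
  refine ⟨(p : L)⁻¹ * x, ⟨?_, ?_⟩, by field_simp⟩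
  · rw [norm_mul, norm_inv, hpL, inv_inv]
    calc (p : ℝ) * ‖x‖ ≤ p * (p : ℝ)⁻¹ := by
          gcongr
          exact norm_le_inv_of_norm_lt_one hp1 hur hx1
      _ = 1 := mul_inv_cancel₀ (by positivity)
  · rw [← hx2]
    refine tsum_congr fun m => ?_
    rw [mul_pow, inv_pow]
    field_simp
end

section
/- Let k ≥ 1 be an integer and let a : ℕ → O_L be a sequence such that |a_n| > p^{-k} for at least one n (i.e. the reduction of the divided-power series modulo m_L^k is non-zero). Then there exists a natural number N, depending only on p, L, k, and the residues of the a_n modulo m_L^k, such that for every sequence b : ℕ → O_L with |b_n − a_n| ≤ p^{-k} for all n, the set {x ∈ m_L : Σ_{n≥0} b_n x^n/n! = 0} has at most N elements. (Second part of Lemma 2.3: the number of zeroes in m_L of a divided-power series over O_L whose reduction modulo m_L^k is non-zero is bounded in terms of that reduction alone.) -/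
open Finset Polynomial

section Aux
variable {L : Type*} [NormedField L] [IsUltrametricDist L]

lemma norm_sub_le_max'' (x y : L) : ‖x - y‖ ≤ max ‖x‖ ‖y‖ := by
  rw [sub_eq_add_neg]
  simpa using IsUltrametricDist.norm_add_le_max x (-y)

lemma coeff_prod_X_sub_C_norm_le {ι : Type*} [DecidableEq ι] (t : Finset ι) (f : ι → L) {r : ℝ}
    (hr0 : 0 ≤ r) (hr1 : r ≤ 1) (hf : ∀ i ∈ t, ‖f i‖ ≤ r) (j : ℕ) :
    ‖(∏ i ∈ t, (X - C (f i))).coeff j‖ ≤ r ^ (t.card - j) := by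
  induction t using Finset.induction generalizing j with
  | empty =>
      simp only [prod_empty, Finset.card_empty, Nat.zero_sub, pow_zero, coeff_one]
      split <;> simp
  | @insert a t ha ih =>
      have hfa : ‖f a‖ ≤ r := hf a (mem_insert_self a t)
      have hft : ∀ i ∈ t, ‖f i‖ ≤ r := fun i hi => hf i (mem_insert_of_mem hi)
      rw [prod_insert ha, card_insert_of_notMem ha]
      have hmul : ((X - C (f a)) * ∏ i ∈ t, (X - C (f i))).coeff j
          = (X * ∏ i ∈ t, (X - C (f i))).coeff j - f a * (∏ i ∈ t, (X - C (f i))).coeff j := by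
        rw [sub_mul, coeff_sub, coeff_C_mul]
      rw [hmul]
      refine (norm_sub_le_max'' _ _).trans (max_le ?_ ?_)
      · rcases j with _ | j'
        · simpa using pow_nonneg hr0 _
        · rw [coeff_X_mul]
          refine (ih hft j').trans ?_
          exact pow_le_pow_of_le_one hr0 hr1 (by omega)
      · rw [norm_mul]
        calc ‖f a‖ * ‖(∏ i ∈ t, (X - C (f i))).coeff j‖ ≤ r * r ^ (t.card - j) :=
              mul_le_mul hfa (ih hft j) (norm_nonneg _) hr0
          _ = r ^ (t.card - j + 1) := by rw [pow_succ, mul_comm]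
          _ ≤ r ^ (t.card + 1 - j) := pow_le_pow_of_le_one hr0 hr1 (by omega)

lemma lagrange_basis_coeff {ι : Type*} [DecidableEq ι] (s : Finset ι) (v : ι → L) {i : ι}
    (hi : i ∈ s) :
    (Lagrange.basis s v i).coeff (s.card - 1) = (∏ j ∈ s.erase i, (v i - v j))⁻¹ := by
  have hb : Lagrange.basis s v i
      = C ((∏ j ∈ s.erase i, (v i - v j))⁻¹) * Lagrange.nodal (s.erase i) v := by
    unfold Lagrange.basis Lagrange.basisDivisor
    rw [Lagrange.nodal_eq, prod_mul_distrib, ← map_prod, Finset.prod_inv_distrib]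
  have hdeg : (Lagrange.nodal (s.erase i) v).natDegree = s.card - 1 := by
    rw [Lagrange.natDegree_nodal, Finset.card_erase_of_mem hi]
  rw [hb, coeff_C_mul, ← hdeg, Lagrange.nodal_monic.coeff_natDegree, mul_one]

end Aux

section Strassmann

variable {L : Type*} [NormedField L] [CompleteSpace L] [IsUltrametricDist L]

lemma strassmann_no_tuple (c : ℕ → L) (r : ℝ) (hr0 : 0 < r) (hr1 : r ≤ 1) (M : ℕ)
    (hstrict : ∀ n, M < n → ‖c n‖ * r ^ n < ‖c M‖ * r ^ M)
    (hcM : c M ≠ 0)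
    (hdecay : Filter.Tendsto (fun n => ‖c n‖ * r ^ n) Filter.atTop (nhds 0))
    (z : Fin (M + 1) → L) (hinj : Function.Injective z)
    (hzr : ∀ i, ‖z i‖ ≤ r) (hzero : ∀ i, ∑' n, c n * z i ^ n = 0) : False := by
  classical
  set s : Finset (Fin (M + 1)) := Finset.univ with hsdef
  have hcard : s.card = M + 1 := by simp [hsdef]
  have hvs : Set.InjOn z s := Function.Injective.injOn hinj
  set D : Fin (M + 1) → L := fun i => (∏ j ∈ s.erase i, (z i - z j))⁻¹ with hD
  set S : ℕ → L := fun n => ∑ i, D i * z i ^ n with hS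
  -- Facts A and B : S n for n ≤ M
  have hAB : ∀ n, n ≤ M → S n = if M = n then 1 else 0 := by
    intro n hn
    have hdeg : (X ^ n : L[X]).degree < s.card := by
      rw [degree_X_pow, hcard]
      exact_mod_cast Nat.lt_succ_of_le hn
    have h1 : (X ^ n : L[X]) = Lagrange.interpolate s z (fun i => (X ^ n : L[X]).eval (z i)) :=
      Lagrange.eq_interpolate hvs hdeg
    have h2 : ((X ^ n : L[X])).coeff M
        = ∑ i ∈ s, z i ^ n * (Lagrange.basis s z i).coeff M := by
      conv_lhs => rw [h1]
      rw [Lagrange.interpolate_apply, Polynomial.finset_sum_coeff]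
      exact Finset.sum_congr rfl fun i _ => by rw [coeff_C_mul, eval_pow, eval_X]
    rw [coeff_X_pow] at h2
    have h3 : ∀ i ∈ s, (Lagrange.basis s z i).coeff M = D i := by
      intro i hi
      have h4 := lagrange_basis_coeff s z hi
      rwa [hcard, Nat.add_sub_cancel] at h4
    have h5 : S n = ∑ i ∈ s, z i ^ n * (Lagrange.basis s z i).coeff M := by
      rw [hS]
      exact Finset.sum_congr rfl fun i hi => by rw [h3 i hi, mul_comm]
    rw [h5, ← h2]
  -- the nodal polynomial
  set P : L[X] := Lagrange.nodal s z with hP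
  have hPdeg : P.natDegree = M + 1 := by rw [hP, Lagrange.natDegree_nodal, hcard]
  have hPcoeff : ∀ j, ‖P.coeff j‖ ≤ r ^ (M + 1 - j) := by
    intro j
    have := coeff_prod_X_sub_C_norm_le s z hr0.le hr1 (fun i _ => hzr i) j
    rwa [← Lagrange.nodal_eq, ← hP, hcard] at this
  have hroot : ∀ i, z i ^ (M + 1) = -∑ j ∈ Finset.range (M + 1), P.coeff j * z i ^ j := by
    intro i
    have h0 : P.eval (z i) = 0 := Lagrange.eval_nodal_at_node (Finset.mem_univ i)
    have h1 : P.eval (z i) = ∑ j ∈ Finset.range (M + 2), P.coeff j * z i ^ j := by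
      rw [Polynomial.eval_eq_sum_range, hPdeg]
    have h2 : P.coeff (M + 1) = 1 := by
      have := Lagrange.nodal_monic (s := s) (v := z)
      rw [← hP] at this
      rw [← hPdeg]
      exact this.coeff_natDegree
    rw [h0, Finset.sum_range_succ, h2, one_mul] at h1
    linear_combination -h1
  -- recurrence for S
  have hSrec : ∀ m, S (m + (M + 1)) = -∑ j ∈ Finset.range (M + 1), P.coeff j * S (m + j) := by
    intro m
    have hterm : ∀ i : Fin (M + 1), D i * z i ^ (m + (M + 1))
        = -∑ j ∈ Finset.range (M + 1), P.coeff j * (D i * z i ^ (m + j)) := by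
      intro i
      calc D i * z i ^ (m + (M + 1)) = D i * z i ^ m * z i ^ (M + 1) := by
            rw [pow_add, mul_assoc]
        _ = D i * z i ^ m * (-∑ j ∈ Finset.range (M + 1), P.coeff j * z i ^ j) := by
            rw [← hroot i]
        _ = -∑ j ∈ Finset.range (M + 1), P.coeff j * (D i * z i ^ (m + j)) := by
            rw [mul_neg, Finset.mul_sum]
            congr 1
            exact Finset.sum_congr rfl fun j _ => by rw [pow_add]; ring
    calc S (m + (M + 1))
        = ∑ i, -∑ j ∈ Finset.range (M + 1), P.coeff j * (D i * z i ^ (m + j)) :=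
          Finset.sum_congr rfl fun i _ => hterm i
      _ = -∑ i, ∑ j ∈ Finset.range (M + 1), P.coeff j * (D i * z i ^ (m + j)) := by
          rw [Finset.sum_neg_distrib]
      _ = -∑ j ∈ Finset.range (M + 1), P.coeff j * S (m + j) := by
          rw [Finset.sum_comm]
          congr 1
          refine Finset.sum_congr rfl fun j _ => ?_
          rw [Finset.mul_sum]
  -- norm bound for S
  have hSbound : ∀ n, ‖S n‖ ≤ r ^ n / r ^ M := by
    intro n
    induction n using Nat.strong_induction_on with
    | _ n ih =>
      rcases lt_trichotomy n M with h | h | h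
      · rw [hAB n h.le, if_neg (by omega)]
        simpa using div_nonneg (pow_nonneg hr0.le n) (pow_nonneg hr0.le M)
      · subst h
        rw [hAB n le_rfl, if_pos rfl, norm_one, div_self (pow_ne_zero n hr0.ne')]
      · obtain ⟨m, rfl⟩ : ∃ m, n = m + (M + 1) := ⟨n - (M + 1), by omega⟩
        rw [hSrec m, norm_neg]
        refine IsUltrametricDist.norm_sum_le_of_forall_le_of_nonneg
          (div_nonneg (pow_nonneg hr0.le _) (pow_nonneg hr0.le M)) fun j hj => ?_
        have hjM : j ≤ M := by
          have := Finset.mem_range.mp hj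
          omega
        rw [norm_mul]
        calc ‖P.coeff j‖ * ‖S (m + j)‖ ≤ r ^ (M + 1 - j) * (r ^ (m + j) / r ^ M) := by
              refine mul_le_mul (hPcoeff j) (ih (m + j) (by omega)) (norm_nonneg _)
                (pow_nonneg hr0.le _)
          _ = r ^ (m + (M + 1)) / r ^ M := by
              rw [← mul_div_assoc, ← pow_add]
              congr 2
              omega
  -- summability
  have hsum0 : ∀ x : L, ‖x‖ ≤ r → Summable fun n => c n * x ^ n := by
    intro x hx
    refine NonarchimedeanAddGroup.summable_of_tendsto_cofinite_zero ?_
    rw [Nat.cofinite_eq_atTop]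
    refine squeeze_zero_norm (fun n => ?_) hdecay
    rw [norm_mul, norm_pow]
    exact mul_le_mul_of_nonneg_left (pow_le_pow_left₀ (norm_nonneg x) hx n) (norm_nonneg _)
  have hgsum : ∀ i : Fin (M + 1), Summable fun n => D i * (c n * z i ^ n) := fun i =>
    (hsum0 (z i) (hzr i)).mul_left (D i)
  have hfuneq : (fun n => c n * S n) = fun n => ∑ i, D i * (c n * z i ^ n) := by
    funext n
    rw [hS, Finset.mul_sum]
    exact Finset.sum_congr rfl fun i _ => by ring
  have hsumh : Summable fun n => c n * S n := by
    rw [hfuneq]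
    exact summable_sum fun i _ => hgsum i
  have hkey : ∑' n, c n * S n = 0 := by
    rw [hfuneq, Summable.tsum_finsetSum fun i _ => hgsum i]
    refine Finset.sum_eq_zero fun i _ => ?_
    rw [tsum_mul_left, hzero i, mul_zero]
  -- split the sum
  have hsplit : ∑ i ∈ Finset.range (M + 1), c i * S i
      + ∑' n, c (n + (M + 1)) * S (n + (M + 1)) = 0 := by
    rw [Summable.sum_add_tsum_nat_add (M + 1) hsumh, hkey]
  have hfin : ∑ i ∈ Finset.range (M + 1), c i * S i = c M := by
    rw [Finset.sum_range_succ]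
    have h0 : ∀ i ∈ Finset.range M, c i * S i = 0 := fun i hi => by
      rw [hAB i (Finset.mem_range.mp hi).le, if_neg (by have := Finset.mem_range.mp hi; omega),
        mul_zero]
    rw [Finset.sum_eq_zero h0, hAB M le_rfl, if_pos rfl, zero_add, mul_one]
  have htail : c M = -∑' n, c (n + (M + 1)) * S (n + (M + 1)) := by
    rw [hfin] at hsplit
    linear_combination hsplit
  -- construct the strict bound C
  have hpos : 0 < ‖c M‖ * r ^ M := mul_pos (norm_pos_iff.mpr hcM) (pow_pos hr0 M)
  obtain ⟨T, hT⟩ : ∃ T, ∀ n ≥ T, ‖c n‖ * r ^ n ≤ (‖c M‖ * r ^ M) / 2 := by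
    obtain ⟨T, hT⟩ := Filter.eventually_atTop.mp (hdecay.eventually_lt_const (half_pos hpos))
    exact ⟨T, fun n hn => (hT n hn).le⟩
  set Fs : Finset ℝ := insert ((‖c M‖ * r ^ M) / 2)
    ((Finset.Ioc M T).image fun n => ‖c n‖ * r ^ n) with hFs
  have hFsne : Fs.Nonempty := ⟨_, Finset.mem_insert_self _ _⟩
  set Cb := Fs.max' hFsne with hCb
  have hCb_lt : Cb < ‖c M‖ * r ^ M := by
    rw [hCb, Finset.max'_lt_iff]
    intro x hx
    rcases Finset.mem_insert.mp hx with rfl | hx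
    · exact half_lt_self hpos
    · obtain ⟨n, hn, rfl⟩ := Finset.mem_image.mp hx
      exact hstrict n (Finset.mem_Ioc.mp hn).1
  have hCb_nonneg : 0 ≤ Cb :=
    le_trans (half_pos hpos).le (Finset.le_max' _ _ (Finset.mem_insert_self _ _))
  have hCb_ge : ∀ n, M < n → ‖c n‖ * r ^ n ≤ Cb := by
    intro n hn
    rcases le_or_gt n T with h | h
    · refine Finset.le_max' Fs _ ?_
      rw [hFs]
      exact Finset.mem_insert_of_mem
        (Finset.mem_image_of_mem (fun n => ‖c n‖ * r ^ n) (Finset.mem_Ioc.mpr ⟨hn, h⟩))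
    · exact (hT n h.le).trans (Finset.le_max' _ _ (Finset.mem_insert_self _ _))
  -- final contradiction
  have h1 : ‖c M‖ ≤ Cb / r ^ M := by
    rw [htail, norm_neg]
    refine IsUltrametricDist.norm_tsum_le_of_forall_le_of_nonneg
      (div_nonneg hCb_nonneg (pow_pos hr0 M).le) fun n => ?_
    rw [norm_mul]
    calc ‖c (n + (M + 1))‖ * ‖S (n + (M + 1))‖
        ≤ ‖c (n + (M + 1))‖ * (r ^ (n + (M + 1)) / r ^ M) :=
          mul_le_mul_of_nonneg_left (hSbound _) (norm_nonneg _)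
      _ = ‖c (n + (M + 1))‖ * r ^ (n + (M + 1)) / r ^ M := by rw [mul_div_assoc]
      _ ≤ Cb / r ^ M := by
          gcongr
          exact hCb_ge (n + (M + 1)) (by omega)
  have h2 : Cb / r ^ M < ‖c M‖ := by
    rw [div_lt_iff₀ (pow_pos hr0 M)]
    exact hCb_lt
  exact absurd (h1.trans_lt h2) (lt_irrefl _)

lemma strassmann_count (c : ℕ → L) (r : ℝ) (hr0 : 0 < r) (hr1 : r ≤ 1) (M : ℕ)
    (hstrict : ∀ n, M < n → ‖c n‖ * r ^ n < ‖c M‖ * r ^ M)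
    (hcM : c M ≠ 0)
    (hdecay : Filter.Tendsto (fun n => ‖c n‖ * r ^ n) Filter.atTop (nhds 0)) :
    {x : L | ‖x‖ ≤ r ∧ ∑' n, c n * x ^ n = 0}.Finite ∧
      {x : L | ‖x‖ ≤ r ∧ ∑' n, c n * x ^ n = 0}.ncard ≤ M := by
  set Z := {x : L | ‖x‖ ≤ r ∧ ∑' n, c n * x ^ n = 0} with hZ
  have hno : ∀ t : Set L, t ⊆ Z → t.Finite → t.ncard ≠ M + 1 := by
    intro t hsub hfin hcardt
    have hucard : hfin.toFinset.card = M + 1 := by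
      rw [← Set.ncard_eq_toFinset_card t hfin]
      exact hcardt
    set e := hfin.toFinset.equivFinOfCardEq hucard with he
    set z : Fin (M + 1) → L := fun i => ((e.symm i : hfin.toFinset) : L) with hz
    have hinj : Function.Injective z := fun i j hij => by
      apply e.symm.injective
      exact Subtype.ext hij
    have hmem : ∀ i, z i ∈ Z := fun i => hsub (hfin.mem_toFinset.mp (e.symm i).2)
    exact strassmann_no_tuple c r hr0 hr1 M hstrict hcM hdecay z hinj
      (fun i => (hmem i).1) (fun i => (hmem i).2)
  have hfinZ : Z.Finite := by
    by_contra h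
    obtain ⟨t, hsub, hfin, hcard⟩ := (show Z.Infinite from h).exists_subset_ncard_eq (M + 1)
    exact hno t hsub hfin hcard
  refine ⟨hfinZ, ?_⟩
  by_contra h
  push_neg at h
  obtain ⟨t, hsub, hcard⟩ := Set.exists_subset_card_eq (show M + 1 ≤ Z.ncard from h)
  exact hno t hsub (hfinZ.subset hsub) hcard

end Strassmann



/-- the number of zeroes in `m_L` of a divided-power series over `O_L`
whose reduction modulo `m_L^k` is non-zero is bounded in terms of that reduction alone:
there is an `N` (depending only on `p`, `L`, `k` and the residues of the `a n` modulo
`m_L^k`) bounding the number of zeroes in `m_L` of every divided-power series with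
coefficients congruent to the `a n` modulo `m_L^k`. Here `p` is odd and `L/ℚ_p` is
finite unramified. -/
theorem statement5 (p : ℕ) [Fact p.Prime] (hp : Odd p) (L : Type*) [NormedField L]
    [CompleteSpace L] [IsUltrametricDist L] [CharZero L]
    [Algebra ℚ_[p] L] [FiniteDimensional ℚ_[p] L]
    (hext : ∀ q : ℚ_[p], ‖algebraMap ℚ_[p] L q‖ = ‖q‖)
    (hur : ∀ y : L, y ≠ 0 → ∃ n : ℤ, ‖y‖ = (p : ℝ) ^ n)
    (k : ℕ) (hk : 1 ≤ k)
    (a : ℕ → L) (ha : ∀ n, ‖a n‖ ≤ 1)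
    (hnz : ∃ n, (p : ℝ) ^ (-(k : ℤ)) < ‖a n‖) :
    ∃ N : ℕ, ∀ b : ℕ → L, (∀ n, ‖b n‖ ≤ 1) →
      (∀ n, ‖b n - a n‖ ≤ (p : ℝ) ^ (-(k : ℤ))) →
      {x : L | ‖x‖ < 1 ∧ ∑' n : ℕ, b n * x ^ n / (n.factorial : L) = 0}.Finite ∧
        {x : L | ‖x‖ < 1 ∧ ∑' n : ℕ, b n * x ^ n / (n.factorial : L) = 0}.ncard ≤ N := by
  classical
  obtain ⟨n₀, hn₀⟩ := hnz
  have hpne2 : p ≠ 2 := by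
    rintro rfl
    exact (Nat.not_odd_iff_even.mpr even_two) hp
  have hp3 : 3 ≤ p := by
    have := (Fact.out : p.Prime).two_le
    omega
  set q : ℝ := (p : ℝ) with hqdef
  have hq1 : 1 < q := by
    rw [hqdef]
    exact_mod_cast (by omega : 1 < p)
  have hq0 : 0 < q := lt_trans one_pos hq1
  set r : ℝ := q⁻¹ with hrdef
  have hr0 : 0 < r := inv_pos.mpr hq0
  have hr1' : r < 1 := inv_lt_one_of_one_lt₀ hq1
  have hr1 : r ≤ 1 := hr1'.le
  -- membership characterisation
  have hmem : ∀ x : L, ‖x‖ < 1 ↔ ‖x‖ ≤ r := by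
    intro x
    constructor
    · intro hx
      rcases eq_or_ne x 0 with rfl | hx0
      · simpa using hr0.le
      · obtain ⟨n, hn⟩ := hur x hx0
        rw [hn] at hx ⊢
        have hn0 : n < 0 := by
          by_contra h
          push_neg at h
          have h5 : q ^ (0 : ℤ) ≤ q ^ n := zpow_le_zpow_right₀ hq1.le h
          rw [zpow_zero] at h5
          linarith
        have h2 : q ^ n ≤ q ^ (-1 : ℤ) := zpow_le_zpow_right₀ hq1.le (by omega)
        simpa [zpow_neg] using h2
    · intro hx
      exact lt_of_le_of_lt hx hr1'
  set v : ℕ → ℕ := fun n => padicValNat p n.factorial with hvdef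
  have hfactnorm : ∀ n : ℕ, ‖((n.factorial : ℕ) : L)‖ = q ^ (-(v n : ℤ)) := by
    intro n
    have h1 : ((n.factorial : ℕ) : L) = algebraMap ℚ_[p] L ((n.factorial : ℕ) : ℚ_[p]) := by
      rw [map_natCast]
    rw [h1, hext]
    have h2 : ((n.factorial : ℕ) : ℚ_[p]) ≠ 0 := Nat.cast_ne_zero.mpr n.factorial_ne_zero
    rw [Padic.norm_eq_zpow_neg_valuation h2, Padic.valuation_natCast]
  have hv2 : ∀ n, 2 * v n ≤ n := by
    intro n
    calc 2 * v n ≤ (p - 1) * v n := Nat.mul_le_mul_right _ (by omega)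
      _ = n - (p.digits n).sum := sub_one_mul_padicValNat_factorial n
      _ ≤ n := Nat.sub_le _ _
  have hrq : ∀ n : ℕ, r ^ n = q ^ (-(n : ℤ)) := by
    intro n
    rw [hrdef, inv_pow, ← zpow_natCast, ← zpow_neg]
  refine ⟨2 * (k + n₀ + 1), fun b hb hba => ?_⟩
  set N := 2 * (k + n₀ + 1) with hNdef
  set c : ℕ → L := fun n => b n / ((n.factorial : ℕ) : L) with hcdef
  set B : ℕ → ℝ := fun n => ‖c n‖ * r ^ n with hBdef
  have hcnorm : ∀ n, ‖c n‖ = ‖b n‖ * q ^ (v n : ℤ) := by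
    intro n
    rw [hcdef]
    simp only []
    rw [norm_div, hfactnorm n, zpow_neg, div_eq_mul_inv, inv_inv]
  have hBle : ∀ n, B n ≤ q ^ ((v n : ℤ) - n) := by
    intro n
    rw [hBdef]
    simp only []
    rw [hcnorm n, hrq n]
    calc ‖b n‖ * q ^ (v n : ℤ) * q ^ (-(n : ℤ)) ≤ 1 * q ^ (v n : ℤ) * q ^ (-(n : ℤ)) := by
          gcongr
          exact hb n
      _ = q ^ ((v n : ℤ) - n) := by
          rw [one_mul, ← zpow_add₀ hq0.ne']
          congr 1
  have htail : ∀ n, N ≤ n → B n ≤ q ^ (-(k + n₀ + 1 : ℕ) : ℤ) := by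
    intro n hn
    refine (hBle n).trans (zpow_le_zpow_right₀ hq1.le ?_)
    have := hv2 n
    push_cast
    omega
  have hBnonneg : ∀ n, 0 ≤ B n := fun n =>
    mul_nonneg (norm_nonneg _) (pow_nonneg hr0.le _)
  have hdecay : Filter.Tendsto B Filter.atTop (nhds 0) := by
    have hsq : ∀ n, B n ≤ Real.sqrt r ^ n := by
      intro n
      have h2 : (q ^ ((v n : ℤ) - n)) ^ 2 ≤ r ^ n := by
        rw [← zpow_natCast (q ^ ((v n : ℤ) - n)) 2, ← zpow_mul, hrq n]
        refine zpow_le_zpow_right₀ hq1.le ?_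
        have := hv2 n
        push_cast
        omega
      have h3 : q ^ ((v n : ℤ) - n) ≤ Real.sqrt r ^ n := by
        have h4 : (Real.sqrt r ^ n) ^ 2 = r ^ n := by
          rw [← pow_right_comm, Real.sq_sqrt hr0.le]
        calc q ^ ((v n : ℤ) - n) = Real.sqrt ((q ^ ((v n : ℤ) - n)) ^ 2) :=
              (Real.sqrt_sq (zpow_pos hq0 _).le).symm
          _ ≤ Real.sqrt ((Real.sqrt r ^ n) ^ 2) := Real.sqrt_le_sqrt (by rw [h4]; exact h2)
          _ = Real.sqrt r ^ n := Real.sqrt_sq (pow_nonneg (Real.sqrt_nonneg r) n)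
      exact (hBle n).trans h3
    have hs1 : Real.sqrt r < 1 := by
      calc Real.sqrt r < Real.sqrt 1 := Real.sqrt_lt_sqrt hr0.le hr1'
        _ = 1 := Real.sqrt_one
    exact squeeze_zero hBnonneg hsq
      (tendsto_pow_atTop_nhds_zero_of_lt_one (Real.sqrt_nonneg r) hs1)
  -- lower bound at n₀
  have hbn₀norm : q ^ (-(k : ℤ)) < ‖b n₀‖ := by
    have h := norm_sub_le_max'' (b n₀) (b n₀ - a n₀)
    rw [sub_sub_cancel] at h
    rcases le_max_iff.mp h with h1 | h1
    · exact lt_of_lt_of_le hn₀ h1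
    · exact absurd (h1.trans (hba n₀)) (not_le.mpr hn₀)
  have hbn₀ : q ^ (-(k + n₀ : ℕ) : ℤ) < B n₀ := by
    have h1 : ‖b n₀‖ * q ^ (-(n₀ : ℤ)) ≤ B n₀ := by
      rw [hBdef]
      simp only []
      rw [hcnorm n₀, hrq n₀]
      gcongr
      nth_rewrite 1 [show ‖b n₀‖ = ‖b n₀‖ * 1 by ring]
      gcongr
      have h6 : q ^ (0 : ℤ) ≤ q ^ (v n₀ : ℤ) := zpow_le_zpow_right₀ hq1.le (by positivity)
      rwa [zpow_zero] at h6
    refine lt_of_lt_of_le ?_ h1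
    calc q ^ (-(k + n₀ : ℕ) : ℤ) = q ^ (-(k : ℤ)) * q ^ (-(n₀ : ℤ)) := by
          rw [← zpow_add₀ hq0.ne']
          congr 1
          push_cast
          omega
      _ < ‖b n₀‖ * q ^ (-(n₀ : ℤ)) := by
          gcongr
  -- choosing the critical index M
  have hFne : (Finset.range (N + 1)).Nonempty := ⟨0, Finset.mem_range.mpr (by omega)⟩
  set maxB : ℝ := (Finset.range (N + 1)).sup' hFne B with hmaxBdef
  set G : Finset ℕ := (Finset.range (N + 1)).filter (fun n => B n = maxB) with hGdef
  have hGne : G.Nonempty := by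
    obtain ⟨i, hi, hieq⟩ := Finset.exists_mem_eq_sup' hFne B
    exact ⟨i, Finset.mem_filter.mpr ⟨hi, hieq.symm⟩⟩
  set M := G.max' hGne with hMdef
  have hMG : M ∈ G := Finset.max'_mem G hGne
  have hMrange : M ≤ N := by
    have := (Finset.mem_filter.mp hMG).1
    have := Finset.mem_range.mp this
    omega
  have hBM : B M = maxB := (Finset.mem_filter.mp hMG).2
  have hn₀mem : n₀ ∈ Finset.range (N + 1) := Finset.mem_range.mpr (by omega)
  have hn₀le : B n₀ ≤ maxB := Finset.le_sup' B hn₀mem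
  have hBMpos : 0 < B M := by
    rw [hBM]
    calc (0 : ℝ) < q ^ (-(k + n₀ : ℕ) : ℤ) := zpow_pos hq0 _
      _ < B n₀ := hbn₀
      _ ≤ maxB := hn₀le
  have hcM : c M ≠ 0 := by
    intro h
    rw [hBdef] at hBMpos
    simp only [h, norm_zero, zero_mul] at hBMpos
    exact lt_irrefl 0 hBMpos
  have hstrict : ∀ n, M < n → B n < B M := by
    intro n hn
    rcases le_or_gt n N with h | h
    · have hnF : n ∈ Finset.range (N + 1) := Finset.mem_range.mpr (by omega)
      have h1 : B n ≤ maxB := Finset.le_sup' B hnF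
      rcases lt_or_eq_of_le h1 with h2 | h2
      · rw [hBM]; exact h2
      · exfalso
        have hG : n ∈ G := Finset.mem_filter.mpr ⟨hnF, h2⟩
        have := Finset.le_max' G n hG
        omega
    · calc B n ≤ q ^ (-(k + n₀ + 1 : ℕ) : ℤ) := htail n (by omega)
        _ < q ^ (-(k + n₀ : ℕ) : ℤ) := zpow_lt_zpow_right₀ hq1 (by push_cast; omega)
        _ < B n₀ := hbn₀
        _ ≤ B M := hBM ▸ hn₀le
  -- rewrite the zero set
  have hset : {x : L | ‖x‖ < 1 ∧ ∑' n : ℕ, b n * x ^ n / (n.factorial : L) = 0}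
      = {x : L | ‖x‖ ≤ r ∧ ∑' n : ℕ, c n * x ^ n = 0} := by
    ext x
    simp only [Set.mem_setOf_eq]
    have hts : (∑' n : ℕ, b n * x ^ n / (n.factorial : L)) = ∑' n : ℕ, c n * x ^ n :=
      tsum_congr fun n => (div_mul_eq_mul_div _ _ _).symm
    rw [hts]
    exact and_congr (hmem x) Iff.rfl
  rw [hset]
  obtain ⟨hfin, hcard⟩ := strassmann_count c r hr0 hr1 M hstrict hcM hdecay
  exact ⟨hfin, hcard.trans (by omega)⟩
end

section
/- Let n ≥ 1 and let A be an n × n matrix whose entries are formal power series with coefficients in O_L, and let f₀ ∈ O_L^n. Then there exists a unique vector f = (f_1, …, f_n) of formal power series over L such that the constant term of f is f₀ and f satisfies the linear differential system f' = A·f (entrywise formal derivative, with A viewed as a matrix over L[[t]]); moreover, this unique solution has divided-power integral coefficients: for every m ≥ 0 and every i, m! times the coefficient of t^m in f_i lies in O_L. (One-variable case of Lemma 2.2: flat sections of a connection defined over O_L exist and are unique in the divided-power algebra O_L⟨⟨t⟩⟩ for any integral initial condition.) -/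
/-!
Comparing coefficients of `t^m` in `f' = A f` gives
`(m + 1) f_{m+1} = ∑_{k ≤ m} A_k f_{m-k}`, so the solution exists and is unique, its
coefficients being forced by this recursion. Multiplying by `(m + 1)!` turns it into
`(m + 1)! f_{m+1} = ∑_{k ≤ m} A_k · m!/(m-k)! · (m-k)! f_{m-k}`, and since `m!/(m-k)!` is
an integer, which has norm at most one in a nonarchimedean field, the ultrametric
inequality propagates the bound `‖m! f_m‖ ≤ 1` by induction.
-/

open PowerSeries Finset
open scoped Nat

section FlatSection

variable {ι : Type*} [Fintype ι]

theorem PowerSeries.coeff_sum_mul {R : Type*} [CommSemiring R] (A : ι → R⟦X⟧) (g : ι → R⟦X⟧)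
    (m : ℕ) :
    coeff m (∑ j, A j * g j) =
      ∑ k ∈ range (m + 1), ∑ j, coeff k (A j) * coeff (m - k) (g j) := by
  simp only [map_sum, coeff_mul, Nat.sum_antidiagonal_eq_sum_range_succ_mk]
  exact sum_comm

section Field

variable {L : Type*} [Field L]

noncomputable def flatCoeff (A : ι → ι → L⟦X⟧) (f₀ : ι → L) : ℕ → ι → L
  | 0 => f₀
  | m + 1 => fun i => ((m : L) + 1)⁻¹ *
      ∑ k ∈ range (m + 1), ∑ j, coeff k (A i j) * flatCoeff A f₀ (m - k) j
  decreasing_by exact Nat.lt_succ_of_le (Nat.sub_le m k)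

noncomputable def flatSection (A : ι → ι → L⟦X⟧) (f₀ : ι → L) (i : ι) : L⟦X⟧ :=
  mk fun m => flatCoeff A f₀ m i

variable (A : ι → ι → L⟦X⟧) (f₀ : ι → L)

@[simp]
theorem coeff_flatSection (m : ℕ) (i : ι) :
    coeff m (flatSection A f₀ i) = flatCoeff A f₀ m i :=
  coeff_mk _ _

theorem constantCoeff_flatSection (i : ι) : constantCoeff (flatSection A f₀ i) = f₀ i := by
  rw [← coeff_zero_eq_constantCoeff_apply, coeff_flatSection, flatCoeff]

variable [CharZero L]

theorem derivative_flatSection (i : ι) :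
    d⁄dX L (flatSection A f₀ i) = ∑ j, A i j * flatSection A f₀ j := by
  ext m
  rw [coeff_derivative, coeff_sum_mul, coeff_flatSection, flatCoeff, mul_comm,
    mul_inv_cancel_left₀ (Nat.cast_add_one_ne_zero m)]
  simp only [coeff_flatSection]

variable {A f₀}

theorem coeff_succ_eq_of_derivative_eq {g : ι → L⟦X⟧}
    (hg : ∀ i, d⁄dX L (g i) = ∑ j, A i j * g j) (m : ℕ) (i : ι) :
    coeff (m + 1) (g i) = ((m : L) + 1)⁻¹ *
      ∑ k ∈ range (m + 1), ∑ j, coeff k (A i j) * coeff (m - k) (g j) := by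
  rw [eq_inv_mul_iff_mul_eq₀ (Nat.cast_add_one_ne_zero m), mul_comm, ← coeff_derivative, hg,
    coeff_sum_mul]

theorem eq_flatSection_of_derivative_eq {g : ι → L⟦X⟧}
    (hg₀ : ∀ i, constantCoeff (g i) = f₀ i) (hg : ∀ i, d⁄dX L (g i) = ∑ j, A i j * g j) :
    g = flatSection A f₀ := by
  suffices h : ∀ m i, coeff m (g i) = flatCoeff A f₀ m i by
    funext i
    ext m
    rw [h, coeff_flatSection]
  intro m
  induction m using Nat.strong_induction_on with
  | _ m ih =>
    intro i
    cases m with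
    | zero => rw [coeff_zero_eq_constantCoeff_apply, hg₀, flatCoeff]
    | succ m =>
      rw [coeff_succ_eq_of_derivative_eq hg, flatCoeff]
      congr! 4 with k hk j
      exact ih _ (Nat.lt_succ_of_le (Nat.sub_le m k)) j

theorem factorial_succ_mul_flatCoeff_succ (m : ℕ) (i : ι) :
    ((m + 1)! : L) * flatCoeff A f₀ (m + 1) i =
      ∑ k ∈ range (m + 1), ∑ j, coeff k (A i j) * (m.descFactorial k : L) *
        ((m - k)! * flatCoeff A f₀ (m - k) j) := by
  rw [flatCoeff, Nat.factorial_succ, Nat.cast_mul, Nat.cast_succ, mul_mul_mul_comm,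
    mul_inv_cancel₀ (Nat.cast_add_one_ne_zero m), one_mul, mul_sum]
  refine sum_congr rfl fun k hk => ?_
  rw [mul_sum]
  refine sum_congr rfl fun j _ => ?_
  rw [← Nat.factorial_mul_descFactorial (Nat.le_of_lt_succ (mem_range.mp hk))]
  push_cast
  ring

end Field

theorem norm_factorial_mul_flatCoeff_le_one {L : Type*} [NormedField L] [IsUltrametricDist L]
    [CharZero L] {A : ι → ι → L⟦X⟧} {f₀ : ι → L} (hA : ∀ i j m, ‖coeff m (A i j)‖ ≤ 1)
    (hf₀ : ∀ i, ‖f₀ i‖ ≤ 1) (m : ℕ) (i : ι) :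
    ‖(m ! : L) * flatCoeff A f₀ m i‖ ≤ 1 := by
  induction m using Nat.strong_induction_on generalizing i with
  | _ m ih =>
    cases m with
    | zero => simpa [flatCoeff] using hf₀ i
    | succ m =>
      rw [factorial_succ_mul_flatCoeff_succ]
      refine IsUltrametricDist.norm_sum_le_of_forall_le_of_nonneg zero_le_one fun k hk => ?_
      refine IsUltrametricDist.norm_sum_le_of_forall_le_of_nonneg zero_le_one fun j _ => ?_
      rw [norm_mul, norm_mul]
      exact mul_le_one₀
        (mul_le_one₀ (hA i j k) (norm_nonneg _) (IsUltrametricDist.norm_natCast_le_one L _))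
        (norm_nonneg _) (ih _ (Nat.lt_succ_of_le (Nat.sub_le m k)) j)

end FlatSection

theorem statement7_general (L : Type*) [NormedField L]
    [IsUltrametricDist L] [CharZero L]
    (n : ℕ)
    (A : Fin n → Fin n → PowerSeries L)
    (hA : ∀ i j m, ‖PowerSeries.coeff m (A i j)‖ ≤ 1)
    (f₀ : Fin n → L) (hf₀ : ∀ i, ‖f₀ i‖ ≤ 1) :
    ∃ f : Fin n → PowerSeries L,
      ((∀ i, PowerSeries.constantCoeff (f i) = f₀ i) ∧
          ∀ i, PowerSeries.derivative L (f i) = ∑ j, A i j * f j) ∧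
        (∀ i m, ‖(m.factorial : L) * PowerSeries.coeff m (f i)‖ ≤ 1) ∧
        ∀ g : Fin n → PowerSeries L,
          ((∀ i, PowerSeries.constantCoeff (g i) = f₀ i) ∧
              ∀ i, PowerSeries.derivative L (g i) = ∑ j, A i j * g j) → g = f :=
  ⟨flatSection A f₀, ⟨constantCoeff_flatSection A f₀, derivative_flatSection A f₀⟩,
    fun i m => by simpa using norm_factorial_mul_flatCoeff_le_one hA hf₀ m i,
    fun _ ⟨hg₀, hg⟩ => eq_flatSection_of_derivative_eq hg₀ hg⟩

/-- one-variable case of Lemma 2.2: for an `n × n` matrix `A` of formal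
power series with coefficients in `O_L` and any integral initial condition `f₀`, there
is a unique vector `f` of formal power series over `L` with constant term `f₀`
satisfying the linear system `f' = A · f`, and this unique solution has divided-power
integral coefficients: `m!` times the `m`-th coefficient of each `f i` lies in `O_L`. -/
theorem statement7 (p : ℕ) [Fact p.Prime] (L : Type*) [NormedField L]
    [CompleteSpace L] [IsUltrametricDist L] [CharZero L]
    [Algebra ℚ_[p] L] [FiniteDimensional ℚ_[p] L]
    (hext : ∀ q : ℚ_[p], ‖algebraMap ℚ_[p] L q‖ = ‖q‖)
    (n : ℕ) (hn : 1 ≤ n)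
    (A : Fin n → Fin n → PowerSeries L)
    (hA : ∀ i j m, ‖PowerSeries.coeff m (A i j)‖ ≤ 1)
    (f₀ : Fin n → L) (hf₀ : ∀ i, ‖f₀ i‖ ≤ 1) :
    ∃ f : Fin n → PowerSeries L,
      ((∀ i, PowerSeries.constantCoeff (f i) = f₀ i) ∧
          ∀ i, PowerSeries.derivative L (f i) = ∑ j, A i j * f j) ∧
        (∀ i m, ‖(m.factorial : L) * PowerSeries.coeff m (f i)‖ ≤ 1) ∧
        ∀ g : Fin n → PowerSeries L,
          ((∀ i, PowerSeries.constantCoeff (g i) = f₀ i) ∧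
              ∀ i, PowerSeries.derivative L (g i) = ∑ j, A i j * g j) → g = f :=
  statement7_general L n A hA f₀ hf₀
end
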